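/- arXiv:0804.3500 — 5 statements merged into one kernel-verified Lean document; each statement's English description precedes it below -/
import Mathlib

section
/- Let (M, φ) be a size pair with reduced size function ℓ*. Then ℓ* is right-continuous in the variable y: for every (x,y) ∈ Δ⁺ there exists ε > 0 such that ℓ*(x, y') = ℓ*(x, y) for all y' with y ≤ y' ≤ y + ε. -/
open Set Topology
open scoped ENNReal

noncomputable def rsf {M : Type*} [TopologicalSpace M] (φ : M → ℝ) (x y : ℝ) : ℕ :=
  Set.ncard {C : Set M | ∃ P, φ P ≤ x ∧ C = connectedComponentIn {Q | φ Q ≤ y} P}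

noncomputable def mult {M : Type*} [TopologicalSpace M] (φ : M → ℝ) (p : ℝ × ℝ) : ℤ :=
  sInf {z : ℤ | ∃ ε : ℝ, 0 < ε ∧ p.1 + ε < p.2 - ε ∧
    z = (rsf φ (p.1 + ε) (p.2 - ε) : ℤ) - (rsf φ (p.1 - ε) (p.2 - ε) : ℤ)
      - (rsf φ (p.1 + ε) (p.2 + ε) : ℤ) + (rsf φ (p.1 - ε) (p.2 + ε) : ℤ)}

noncomputable def multInf {M : Type*} [TopologicalSpace M] (φ : M → ℝ) (k : ℝ) : ℤ :=
  sInf {z : ℤ | ∃ ε : ℝ, 0 < ε ∧ k + ε < 1 / ε ∧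
    z = (rsf φ (k + ε) (1 / ε) : ℤ) - (rsf φ (k - ε) (1 / ε) : ℤ)}

open scoped Classical in
noncomputable def eDist (p q : ℝ × EReal) : ℝ≥0∞ :=
  if p.2 = ⊤ ∧ q.2 = ⊤ then ENNReal.ofReal |p.1 - q.1|
  else if p.2 = ⊤ ∨ q.2 = ⊤ then ⊤
  else ENNReal.ofReal (min (max |p.1 - q.1| |p.2.toReal - q.2.toReal|)
    (max ((p.2.toReal - p.1) / 2) ((q.2.toReal - q.1) / 2)))

def IsRepSeq {M : Type*} [TopologicalSpace M] (φ : M → ℝ) (a : ℕ → ℝ × EReal) : Prop :=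
  (∃ k : ℝ, a 0 = (k, ⊤) ∧ 0 < multInf φ k) ∧
  (∀ i : ℕ, 0 < i →
    (∃ x y : ℝ, a i = (x, (y : EReal)) ∧ x < y ∧ 0 < mult φ (x, y)) ∨
    (∃ x : ℝ, a i = (x, (x : EReal)))) ∧
  (∀ x y : ℝ, x < y → 0 < mult φ (x, y) →
    Set.ncard {i : ℕ | a i = (x, (y : EReal))} = (mult φ (x, y)).toNat) ∧
  {i : ℕ | ∃ x : ℝ, a i = (x, (x : EReal))}.Infinite

noncomputable def dMatchSeq (a b : ℕ → ℝ × EReal) : ℝ≥0∞ :=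
  ⨅ σ : {σ : ℕ → ℕ // Function.Bijective σ}, ⨆ i : ℕ, eDist (a i) (b (σ.1 i))

noncomputable def dMatch {M N : Type*} [TopologicalSpace M] [TopologicalSpace N]
    (φ : M → ℝ) (ψ : N → ℝ) : ℝ≥0∞ :=
  sInf {s : ℝ≥0∞ | ∃ a b, IsRepSeq φ a ∧ IsRepSeq ψ b ∧ s = dMatchSeq a b}

section Aux

/-!
The components of `{φ ≤ y}` meeting `{φ ≤ x}` are finitely many, since the open components of
`{φ < y}` cover the compact set `{φ ≤ x}`; choose one point of `{φ ≤ x}` in each. In a compact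
Hausdorff space a nested intersection of continua is connected, so the component of `{φ ≤ y}`
through a point is the intersection of its components in `{φ ≤ t}` for `t > y`. Hence two chosen
points lying in different components at level `y` still do so at all levels slightly above `y`,
and as there are finitely many pairs, one `ε` serves them all: for `y ≤ y' ≤ y + ε` the chosen
points represent pairwise distinct components of `{φ ≤ y'}`, and every component meeting
`{φ ≤ x}` is among them.
-/

section ConnectedComponents

variable {X : Type*} [TopologicalSpace X]

theorem IsClosed.connectedComponentIn {F : Set X} (hF : IsClosed F) (x : X) :
    IsClosed (connectedComponentIn F x) := by
  by_cases hx : x ∈ F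
  · exact closure_subset_iff_isClosed.mp <|
      isPreconnected_connectedComponentIn.closure.subset_connectedComponentIn
        (subset_closure (mem_connectedComponentIn hx))
        (hF.closure_subset_iff.mpr (connectedComponentIn_subset F x))
  · rw [connectedComponentIn_eq_empty hx]
    exact isClosed_empty

theorem connectedComponentIn_eq_of_subset {F G : Set X} (hFG : F ⊆ G) {a b : X} (hb : b ∈ F)
    (h : connectedComponentIn F a = connectedComponentIn F b) :
    connectedComponentIn G a = connectedComponentIn G b :=
  connectedComponentIn_eq <|
    connectedComponentIn_mono a hFG (h ▸ mem_connectedComponentIn hb)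

theorem isPreconnected_iInter_of_directed [T2Space X] {ι : Type*} [Nonempty ι] {V : ι → Set X}
    (hV : Directed (· ⊇ ·) V) (hcpt : ∀ i, IsCompact (V i)) (hpc : ∀ i, IsPreconnected (V i)) :
    IsPreconnected (⋂ i, V i) := by
  have hcpt' : IsCompact (⋂ i, V i) := (hcpt (Classical.arbitrary ι)).of_isClosed_subset
    (isClosed_iInter fun i => (hcpt i).isClosed) (iInter_subset _ _)
  rw [isPreconnected_iff_subset_of_fully_disjoint_closed hcpt'.isClosed]
  intro a b ha hb hab hdisj
  obtain ⟨u, v, hu, hv, hau, hbv, huv⟩ := SeparatedNhds.of_isCompact_isCompact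
    (hcpt'.inter_left ha) (hcpt'.inter_left hb) (hdisj.mono inter_subset_left inter_subset_left)
  obtain ⟨i, hi⟩ : ∃ i, V i ⊆ u ∪ v := exists_subset_nhds_of_isCompact hV hcpt fun z hz =>
    (hu.union hv).mem_nhds ((hab hz).imp (fun h => hau ⟨h, hz⟩) fun h => hbv ⟨h, hz⟩)
  have hsub : ⋂ i, V i ⊆ V i := iInter_subset _ i
  refine ((hpc i).subset_or_subset hu hv huv hi).imp (fun hVu z hz => ?_) fun hVv z hz => ?_
  · exact (hab hz).resolve_right fun hzb => huv.ne_of_mem (hVu (hsub hz)) (hbv ⟨hzb, hz⟩) rfl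
  · exact (hab hz).resolve_left fun hza => huv.ne_of_mem (hau ⟨hza, hz⟩) (hVv (hsub hz)) rfl

theorem IsCompact.finite_image_connectedComponentIn [LocallyConnectedSpace X] {A U F : Set X}
    (hA : IsCompact A) (hU : IsOpen U) (hAU : A ⊆ U) (hUF : U ⊆ F) :
    (connectedComponentIn F '' A).Finite := by
  obtain ⟨s, hsA, hs, hcover⟩ := hA.elim_finite_subcover_image
    (fun P _ => hU.connectedComponentIn (x := P))
    (fun P hP => mem_biUnion hP (mem_connectedComponentIn (hAU hP)))
  refine (hs.image (connectedComponentIn F)).subset ?_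
  rintro _ ⟨P, hP, rfl⟩
  obtain ⟨p, hps, hPp⟩ := mem_iUnion₂.mp (hcover hP)
  exact ⟨p, hps, connectedComponentIn_eq (connectedComponentIn_mono p hUF hPp)⟩

end ConnectedComponents

theorem Set.image_eq_image_of_fibers {α β γ : Type*} {f : α → β} {g : α → γ} {s t : Set α}
    (hts : t ⊆ s) (hf : f '' t = f '' s) (hfg : ∀ a ∈ s, ∀ b ∈ s, f a = f b → g a = g b) :
    g '' t = g '' s := by
  refine (image_mono hts).antisymm ?_
  rintro _ ⟨a, ha, rfl⟩
  obtain ⟨b, hb, hba⟩ := hf ▸ mem_image_of_mem f ha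
  exact ⟨b, hb, hfg b (hts hb) a ha hba⟩

section Sublevel

variable {M : Type*} [TopologicalSpace M] {φ : M → ℝ}

theorem mem_connectedComponentIn_sublevel_of_forall_gt [CompactSpace M] [T2Space M]
    (hφ : Continuous φ) {y : ℝ} {p q : M} (hp : φ p ≤ y)
    (h : ∀ t > y, q ∈ connectedComponentIn {P | φ P ≤ t} p) :
    q ∈ connectedComponentIn {P | φ P ≤ y} p := by
  let V : Ioi y → Set M := fun t => connectedComponentIn {P | φ P ≤ t} p
  have hVmono : Monotone V := fun s t hst =>
    connectedComponentIn_mono p fun z (hz : φ z ≤ s) => hz.trans hst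
  have hV : Directed (· ⊇ ·) V := fun s t =>
    ⟨min s t, hVmono (min_le_left s t), hVmono (min_le_right s t)⟩
  have : Nonempty (Ioi y) := ⟨⟨y + 1, by simp⟩⟩
  have hpV : p ∈ ⋂ t, V t := mem_iInter.mpr fun t =>
    mem_connectedComponentIn (hp.trans (le_of_lt t.2))
  have hVsub : ⋂ t, V t ⊆ {P | φ P ≤ y} := fun z hz =>
    show φ z ≤ y from le_of_forall_gt_imp_ge_of_dense fun t ht =>
      connectedComponentIn_subset _ p (mem_iInter.mp hz ⟨t, ht⟩)
  refine (isPreconnected_iInter_of_directed hV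
    (fun t => ((isClosed_le hφ continuous_const).connectedComponentIn p).isCompact)
    (fun t => isPreconnected_connectedComponentIn)).subset_connectedComponentIn hpV hVsub ?_
  exact mem_iInter.mpr fun t => h t t.2

theorem eventually_notMem_connectedComponentIn_sublevel [CompactSpace M] [T2Space M]
    (hφ : Continuous φ) {y : ℝ} {p q : M} (hp : φ p ≤ y)
    (hq : q ∉ connectedComponentIn {P | φ P ≤ y} p) :
    ∀ᶠ t in 𝓝[≥] y, q ∉ connectedComponentIn {P | φ P ≤ t} p := by
  obtain ⟨t, hyt, hqt⟩ : ∃ t > y, q ∉ connectedComponentIn {P | φ P ≤ t} p := by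
    by_contra! h
    exact hq (mem_connectedComponentIn_sublevel_of_forall_gt hφ hp h)
  filter_upwards [Icc_mem_nhdsGE hyt] with s hs hqs
  exact hqt (connectedComponentIn_mono p (fun z (hz : φ z ≤ s) => hz.trans hs.2) hqs)

theorem eventually_injOn_connectedComponentIn_sublevel [CompactSpace M] [T2Space M]
    (hφ : Continuous φ) {y : ℝ} {T : Set M} (hT : T.Finite) (hTy : T ⊆ {P | φ P ≤ y})
    (hinj : InjOn (connectedComponentIn {P | φ P ≤ y}) T) :
    ∀ᶠ t in 𝓝[≥] y, InjOn (connectedComponentIn {P | φ P ≤ t}) T := by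
  have hsep : ∀ᶠ t in 𝓝[≥] y, ∀ p ∈ T, ∀ q ∈ T, p ≠ q →
      q ∉ connectedComponentIn {P | φ P ≤ t} p := by
    simp only [hT.eventually_all, Filter.eventually_imp_distrib_left]
    exact fun p hp q hq hpq => eventually_notMem_connectedComponentIn_sublevel hφ (hTy hp)
      fun hqp => hpq (hinj hp hq (connectedComponentIn_eq hqp))
  filter_upwards [hsep, self_mem_nhdsWithin] with t ht (hyt : y ≤ t) p hp q hq hpq
  by_contra hne
  exact ht p hp q hq hne (hpq ▸ mem_connectedComponentIn ((hTy hq).trans hyt))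

theorem finite_image_connectedComponentIn_sublevel [LocallyConnectedSpace M] [CompactSpace M]
    (hφ : Continuous φ) {x y : ℝ} (hxy : x < y) :
    (connectedComponentIn {P | φ P ≤ y} '' {P | φ P ≤ x}).Finite :=
  (isClosed_le hφ continuous_const).isCompact.finite_image_connectedComponentIn
    (isOpen_lt hφ continuous_const) (fun P (hP : φ P ≤ x) => hP.trans_lt hxy)
    fun P (hP : φ P < y) => hP.le

theorem rsf_eq_ncard_image (x t : ℝ) :
    rsf φ x t = (connectedComponentIn {P | φ P ≤ t} '' {P | φ P ≤ x}).ncard := by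
  unfold rsf
  congr 1
  ext C
  exact ⟨fun ⟨P, hP, hC⟩ => ⟨P, hP, hC.symm⟩, fun ⟨P, hP, hC⟩ => ⟨P, hP, hC.symm⟩⟩

end Sublevel

theorem rsf_right_continuous_in_y_general
    {M : Type*} [TopologicalSpace M] [CompactSpace M] [LocallyConnectedSpace M] [T2Space M] {φ : M → ℝ} (hφ : Continuous φ)
    (x y : ℝ) (hxy : x < y) :
    ∃ ε > 0, ∀ y' : ℝ, y ≤ y' → y' ≤ y + ε → rsf φ x y' = rsf φ x y := by
  set A : Set M := {P | φ P ≤ x}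
  have hAy : A ⊆ {P | φ P ≤ y} := fun P (hP : φ P ≤ x) => hP.trans hxy.le
  obtain ⟨T, hTA, hT⟩ := exists_subset_bijOn A (connectedComponentIn {P | φ P ≤ y})
  have hTfin : T.Finite :=
    .of_finite_image (hT.image_eq ▸ finite_image_connectedComponentIn_sublevel hφ hxy) hT.injOn
  obtain ⟨ε, hyε, hinj⟩ := mem_nhdsGE_iff_exists_Icc_subset.mp <|
    eventually_injOn_connectedComponentIn_sublevel hφ hTfin (hTA.trans hAy) hT.injOn
  refine ⟨ε - y, by linarith, fun y' hyy' hy'ε => ?_⟩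
  have himg : connectedComponentIn {P | φ P ≤ y'} '' T =
      connectedComponentIn {P | φ P ≤ y'} '' A :=
    image_eq_image_of_fibers hTA hT.image_eq fun a _ b hb =>
      connectedComponentIn_eq_of_subset (fun z (hz : φ z ≤ y) => hz.trans hyy') (hAy hb)
  rw [rsf_eq_ncard_image, rsf_eq_ncard_image, ← himg, ← hT.image_eq,
    (hinj ⟨hyy', by linarith⟩).ncard_image, hT.injOn.ncard_image]

theorem rsf_right_continuous_in_y
    {M : Type*} [TopologicalSpace M] [CompactSpace M] [ConnectedSpace M] [LocallyConnectedSpace M] [T2Space M] {φ : M → ℝ} (hφ : Continuous φ)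
    (x y : ℝ) (hxy : x < y) :
    ∃ ε > 0, ∀ y' : ℝ, y ≤ y' → y' ≤ y + ε → rsf φ x y' = rsf φ x y :=
  rsf_right_continuous_in_y_general hφ x y hxy
end Aux
end

section
/- Let (M, φ) be a size pair. Every proper cornerpoint p̄ = (x̄, ȳ) of the reduced size function ℓ*_{(M,φ)} satisfies min φ ≤ x̄ < ȳ ≤ max φ. Moreover, the abscissa of the cornerpoint at infinity equals min φ. -/
open Set Topology
open scoped ENNReal

/-!
Below `min φ` every sublevel set is empty, and above `max φ` the sublevel set is the whole
connected space, a single component. In either regime the alternating sums defining the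
multiplicities vanish for small `ε`, so a positive multiplicity can only occur inside
`[min φ, max φ]`, and at infinity only at `min φ`.
-/

lemma Int.sInf_nonpos_of_zero_mem {S : Set ℤ} (h : (0 : ℤ) ∈ S) : sInf S ≤ 0 := by
  by_cases hS : BddBelow S
  · exact csInf_le hS h
  · rw [Int.csInf_of_not_bddBelow hS]

lemma Real.exists_pos_lt_and_lt_one_div {δ : ℝ} (hδ : 0 < δ) (c : ℝ) :
    ∃ ε : ℝ, 0 < ε ∧ ε < δ ∧ c < 1 / ε := by
  have hsmall : ∀ᶠ ε in 𝓝[>] (0 : ℝ), 0 < ε ∧ ε < δ := Ioo_mem_nhdsGT hδ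
  have hlarge : ∀ᶠ ε in 𝓝[>] (0 : ℝ), c < 1 / ε := by
    simpa only [one_div] using tendsto_inv_nhdsGT_zero.eventually_gt_atTop c
  obtain ⟨ε, ⟨hε, hεδ⟩, hc⟩ := (hsmall.and hlarge).exists
  exact ⟨ε, hε, hεδ, hc⟩

section SizeFunction

variable {M : Type*} [TopologicalSpace M] {φ : M → ℝ}

lemma rsf_eq_zero {a : ℝ} (h : ∀ P, a < φ P) (b : ℝ) : rsf φ a b = 0 := by
  have hempty : {C : Set M | ∃ P, φ P ≤ a ∧ C = connectedComponentIn {Q | φ Q ≤ b} P} = ∅ :=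
    eq_empty_of_forall_notMem fun _ ⟨P, hP, _⟩ => (h P).not_ge hP
  rw [rsf, hempty, ncard_empty]

open scoped Classical in
lemma rsf_eq_ite_of_forall_le [PreconnectedSpace M] {b : ℝ} (h : ∀ P, φ P ≤ b) (a : ℝ) :
    rsf φ a b = if ∃ P, φ P ≤ a then 1 else 0 := by
  have hcomp (P : M) : connectedComponentIn {Q | φ Q ≤ b} P = univ := by
    rw [show {Q | φ Q ≤ b} = univ from eq_univ_of_forall h, connectedComponentIn_univ,
      PreconnectedSpace.connectedComponent_eq_univ]
  split_ifs with ha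
  · obtain ⟨P₀, hP₀⟩ := ha
    have hsingle : {C : Set M | ∃ P, φ P ≤ a ∧ C = connectedComponentIn {Q | φ Q ≤ b} P}
        = {univ} := by
      ext C
      simp only [mem_ofPred_eq, mem_singleton_iff, hcomp]
      exact ⟨fun ⟨_, _, hC⟩ => hC, fun hC => ⟨P₀, hP₀, hC⟩⟩
    rw [rsf, hsingle, ncard_singleton]
  · push Not at ha
    exact rsf_eq_zero ha b

lemma mult_nonpos_of_rsf_eq {x y ε : ℝ} (hε : 0 < ε) (hxy : x + ε < y - ε)
    (h : rsf φ (x + ε) (y - ε) + rsf φ (x - ε) (y + ε)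
      = rsf φ (x - ε) (y - ε) + rsf φ (x + ε) (y + ε)) :
    mult φ (x, y) ≤ 0 := by
  refine Int.sInf_nonpos_of_zero_mem ⟨ε, hε, hxy, ?_⟩
  have h' := congrArg (fun n : ℕ => (n : ℤ)) h
  push_cast at h'
  linarith

lemma multInf_nonpos_of_rsf_eq {k ε : ℝ} (hε : 0 < ε) (hk : k + ε < 1 / ε)
    (h : rsf φ (k + ε) (1 / ε) = rsf φ (k - ε) (1 / ε)) :
    multInf φ k ≤ 0 :=
  Int.sInf_nonpos_of_zero_mem ⟨ε, hε, hk, by rw [h, sub_self]⟩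

lemma mult_nonpos_of_lt_of_forall_le {m x y : ℝ} (hm : ∀ P, m ≤ φ P) (hx : x < m)
    (hxy : x < y) : mult φ (x, y) ≤ 0 := by
  obtain ⟨ε, hε, hεmin⟩ := exists_between (lt_min (sub_pos.2 hx) (half_pos (sub_pos.2 hxy)))
  obtain ⟨hεm, hεy⟩ := lt_min_iff.1 hεmin
  have hempty {a : ℝ} (ha : a ≤ x + ε) (b : ℝ) : rsf φ a b = 0 :=
    rsf_eq_zero (fun P => by linarith [hm P]) b
  refine mult_nonpos_of_rsf_eq hε (by linarith) ?_
  rw [hempty le_rfl, hempty le_rfl, hempty (by linarith), hempty (by linarith)]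

lemma mult_nonpos_of_forall_le_of_lt [PreconnectedSpace M] {s x y : ℝ} (hs : ∀ P, φ P ≤ s)
    (hy : s < y) (hxy : x < y) : mult φ (x, y) ≤ 0 := by
  obtain ⟨ε, hε, hεmin⟩ := exists_between (lt_min (sub_pos.2 hy) (half_pos (sub_pos.2 hxy)))
  obtain ⟨hεs, hεx⟩ := lt_min_iff.1 hεmin
  refine mult_nonpos_of_rsf_eq hε (by linarith) ?_
  have hbelow : ∀ P, φ P ≤ y - ε := fun P => by linarith [hs P]
  have habove : ∀ P, φ P ≤ y + ε := fun P => by linarith [hs P]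
  rw [rsf_eq_ite_of_forall_le hbelow, rsf_eq_ite_of_forall_le hbelow,
    rsf_eq_ite_of_forall_le habove, rsf_eq_ite_of_forall_le habove, add_comm]

lemma multInf_nonpos_of_lt_of_forall_le {m k : ℝ} (hm : ∀ P, m ≤ φ P) (hk : k < m) :
    multInf φ k ≤ 0 := by
  obtain ⟨ε, hε, hεm, hεk⟩ := Real.exists_pos_lt_and_lt_one_div (sub_pos.2 hk) m
  refine multInf_nonpos_of_rsf_eq hε (by linarith) ?_
  rw [rsf_eq_zero (fun P => by linarith [hm P]), rsf_eq_zero (fun P => by linarith [hm P])]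

lemma multInf_nonpos_of_forall_le_of_lt [PreconnectedSpace M] {s k : ℝ} {P₀ : M}
    (hs : ∀ P, φ P ≤ s) (hk : φ P₀ < k) : multInf φ k ≤ 0 := by
  obtain ⟨ε, hε, hεk, hεs⟩ :=
    Real.exists_pos_lt_and_lt_one_div (sub_pos.2 hk) (max s (2 * k - φ P₀))
  rw [max_lt_iff] at hεs
  refine multInf_nonpos_of_rsf_eq hε (by linarith) ?_
  have htop : ∀ P, φ P ≤ 1 / ε := fun P => by linarith [hs P]
  rw [rsf_eq_ite_of_forall_le htop, rsf_eq_ite_of_forall_le htop,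
    if_pos ⟨P₀, by linarith⟩, if_pos ⟨P₀, by linarith⟩]

end SizeFunction

theorem localization_of_cornerpoints_general
    {M : Type*} [TopologicalSpace M] [CompactSpace M] [ConnectedSpace M] {φ : M → ℝ} (hφ : Continuous φ) :
    (∀ xb yb : ℝ, xb < yb → 0 < mult φ (xb, yb) →
      (⨅ P : M, φ P) ≤ xb ∧ yb ≤ ⨆ P : M, φ P) ∧
    (∀ k : ℝ, 0 < multInf φ k → k = ⨅ P : M, φ P) := by
  have hbdd := isCompact_range hφ
  have hmin : ∀ P, (⨅ P : M, φ P) ≤ φ P := ciInf_le hbdd.bddBelow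
  have hmax : ∀ P, φ P ≤ ⨆ P : M, φ P := le_ciSup hbdd.bddAbove
  refine ⟨fun xb yb hxy hpos => ⟨?_, ?_⟩, fun k hpos => ?_⟩
  · by_contra! hx
    exact (mult_nonpos_of_lt_of_forall_le hmin hx hxy).not_gt hpos
  · by_contra! hy
    exact (mult_nonpos_of_forall_le_of_lt hmax hy hxy).not_gt hpos
  · rcases lt_trichotomy k (⨅ P : M, φ P) with hk | hk | hk
    · exact absurd hpos (multInf_nonpos_of_lt_of_forall_le hmin hk).not_gt
    · exact hk
    · obtain ⟨P₀, hP₀⟩ := exists_lt_of_ciInf_lt hk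
      exact absurd hpos (multInf_nonpos_of_forall_le_of_lt hmax hP₀).not_gt

theorem localization_of_cornerpoints
    {M : Type*} [TopologicalSpace M] [CompactSpace M] [ConnectedSpace M] [LocallyConnectedSpace M] [T2Space M] {φ : M → ℝ} (hφ : Continuous φ) :
    (∀ xb yb : ℝ, xb < yb → 0 < mult φ (xb, yb) →
      (⨅ P : M, φ P) ≤ xb ∧ yb ≤ ⨆ P : M, φ P) ∧
    (∀ k : ℝ, 0 < multInf φ k → k = ⨅ P : M, φ P) :=
  localization_of_cornerpoints_general hφ
end

section
/- The function d on the extended closed half-plane Δ̄* defined by d((x,y),(x',y')) := min{ max{|x−x'|, |y−y'|}, max{(y−x)/2, (y'−x')/2} } (with the standard conventions for ∞) is a pseudo-metric: it is symmetric, vanishes on the diagonal of its arguments, and satisfies the triangle inequality. -/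
open Set Topology
open scoped ENNReal

/-!
Finite points are compared in `ℝ × ℝ` with the sup metric, and `(x, y)` is weighted by
`(y - x) / 2`, its sup distance to the diagonal. Since this weight is 1-Lipschitz, the cheaper of
"match `p` to `q`" and "match both to the diagonal" obeys the triangle inequality in `ℝ≥0∞`,
where truncation at `0` makes the weight's sign irrelevant.
-/

section ViaDiagonal

variable {X : Type*} [PseudoEMetricSpace X]

def edistViaDiagonal (v : X → ℝ≥0∞) (x y : X) : ℝ≥0∞ :=
  min (edist x y) (max (v x) (v y))

theorem edistViaDiagonal_self (v : X → ℝ≥0∞) (x : X) : edistViaDiagonal v x x = 0 := by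
  simp [edistViaDiagonal]

theorem edistViaDiagonal_comm (v : X → ℝ≥0∞) (x y : X) :
    edistViaDiagonal v x y = edistViaDiagonal v y x := by
  rw [edistViaDiagonal, edistViaDiagonal, edist_comm, max_comm]

theorem edistViaDiagonal_triangle {v : X → ℝ≥0∞} (hv : ∀ x y, v x ≤ edist x y + v y)
    (x y z : X) :
    edistViaDiagonal v x z ≤ edistViaDiagonal v x y + edistViaDiagonal v y z := by
  have hv' : ∀ x y, v y ≤ edist x y + v x := fun x y => edist_comm x y ▸ hv y x
  unfold edistViaDiagonal
  rcases min_choice (edist x y) (max (v x) (v y)) with hxy | hxy <;>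
    rcases min_choice (edist y z) (max (v y) (v z)) with hyz | hyz <;> rw [hxy, hyz]
  · exact (min_le_left _ _).trans (edist_triangle x y z)
  · refine (min_le_right _ _).trans (max_le ?_ ?_)
    · exact (hv x y).trans (by gcongr; exact le_max_left _ _)
    · exact le_add_left (le_max_right _ _)
  · refine (min_le_right _ _).trans (max_le ?_ ?_)
    · exact le_add_right (le_max_left _ _)
    · exact (hv' y z).trans (by rw [add_comm]; gcongr; exact le_max_right _ _)
  · refine (min_le_right _ _).trans (max_le ?_ ?_)
    · exact le_add_right (le_max_left _ _)
    · exact le_add_left (le_max_right _ _)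

end ViaDiagonal

noncomputable def halfPersistence (p : ℝ × ℝ) : ℝ≥0∞ :=
  ENNReal.ofReal ((p.2 - p.1) / 2)

theorem halfPersistence_le_edist_add (p q : ℝ × ℝ) :
    halfPersistence p ≤ edist p q + halfPersistence q := by
  have h₁ : |p.1 - q.1| ≤ dist p q := by
    rw [Prod.dist_eq, ← Real.dist_eq]; exact le_max_left _ _
  have h₂ : |p.2 - q.2| ≤ dist p q := by
    rw [Prod.dist_eq, ← Real.dist_eq p.2]; exact le_max_right _ _
  have key : (p.2 - p.1) / 2 ≤ dist p q + (q.2 - q.1) / 2 := by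
    linarith [le_abs_self (p.2 - q.2), neg_abs_le (p.1 - q.1)]
  calc halfPersistence p ≤ ENNReal.ofReal (dist p q + (q.2 - q.1) / 2) :=
        ENNReal.ofReal_le_ofReal key
    _ ≤ edist p q + halfPersistence q := by
        rw [edist_dist]; exact ENNReal.ofReal_add_le

theorem eDist_of_top_of_top {p q : ℝ × EReal} (hp : p.2 = ⊤) (hq : q.2 = ⊤) :
    eDist p q = edist p.1 q.1 := by
  simp [eDist, hp, hq, edist_dist, Real.dist_eq]

theorem eDist_of_ne_top_of_ne_top {p q : ℝ × EReal} (hp : p.2 ≠ ⊤) (hq : q.2 ≠ ⊤) :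
    eDist p q = edistViaDiagonal halfPersistence (p.1, p.2.toReal) (q.1, q.2.toReal) := by
  simp only [eDist, hp, hq, and_self, or_self, if_false, edistViaDiagonal, halfPersistence,
    edist_dist, Prod.dist_eq, Real.dist_eq, ENNReal.ofReal_min, ENNReal.ofReal_max]

theorem eDist_eq_top {p q : ℝ × EReal} (h : ¬(p.2 = ⊤ ↔ q.2 = ⊤)) : eDist p q = ⊤ := by
  unfold eDist
  rw [if_neg (fun h' => h (iff_of_true h'.1 h'.2)), if_pos (by tauto)]

theorem eDist_self (p : ℝ × EReal) : eDist p p = 0 := by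
  by_cases hp : p.2 = ⊤
  · simp [eDist_of_top_of_top hp hp]
  · rw [eDist_of_ne_top_of_ne_top hp hp, edistViaDiagonal_self]

theorem eDist_comm (p q : ℝ × EReal) : eDist p q = eDist q p := by
  by_cases hpq : p.2 = ⊤ ↔ q.2 = ⊤
  · by_cases hp : p.2 = ⊤
    · rw [eDist_of_top_of_top hp (hpq.1 hp), eDist_of_top_of_top (hpq.1 hp) hp, edist_comm]
    · have hq : q.2 ≠ ⊤ := mt hpq.2 hp
      rw [eDist_of_ne_top_of_ne_top hp hq, eDist_of_ne_top_of_ne_top hq hp,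
        edistViaDiagonal_comm]
  · rw [eDist_eq_top hpq, eDist_eq_top (mt Iff.symm hpq)]

theorem eDist_triangle (p q r : ℝ × EReal) : eDist p r ≤ eDist p q + eDist q r := by
  by_cases hpq : p.2 = ⊤ ↔ q.2 = ⊤
  swap; · simp [eDist_eq_top hpq]
  by_cases hqr : q.2 = ⊤ ↔ r.2 = ⊤
  swap; · simp [eDist_eq_top hqr]
  by_cases hq : q.2 = ⊤
  · rw [eDist_of_top_of_top (hpq.2 hq) (hqr.1 hq), eDist_of_top_of_top (hpq.2 hq) hq,
      eDist_of_top_of_top hq (hqr.1 hq)]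
    exact edist_triangle _ _ _
  · rw [eDist_of_ne_top_of_ne_top (mt hpq.1 hq) (mt hqr.2 hq),
      eDist_of_ne_top_of_ne_top (mt hpq.1 hq) hq, eDist_of_ne_top_of_ne_top hq (mt hqr.2 hq)]
    exact edistViaDiagonal_triangle halfPersistence_le_edist_add _ _ _

theorem eDist_is_pseudometric_general
    (p q r : ℝ × EReal) :
    eDist p p = 0 ∧ eDist p q = eDist q p ∧ eDist p r ≤ eDist p q + eDist q r :=
  ⟨eDist_self p, eDist_comm p q, eDist_triangle p q r⟩

theorem eDist_is_pseudometric
    (p q r : ℝ × EReal)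
    (hp : (p.1 : EReal) ≤ p.2) (hq : (q.1 : EReal) ≤ q.2) (hr : (r.1 : EReal) ≤ r.2) :
    eDist p p = 0 ∧ eDist p q = eDist q p ∧ eDist p r ≤ eDist p q + eDist q r :=
  eDist_is_pseudometric_general p q r
end

section
/- Local constancy of multiplicity: Let (M,φ) be a size pair and p̄ = (x̄,ȳ) ∈ Δ⁺ with multiplicity μ(p̄) ≥ 0 for ℓ*_{(M,φ)}. Then there exists η̄ > 0 such that for every 0 ≤ η ≤ η̄ and every continuous ψ : M → ℝ with max_{P∈M} |φ(P) − ψ(P)| ≤ η, the reduced size function ℓ*_{(M,ψ)} has exactly μ(p̄) proper cornerpoints, counted with multiplicity, in the closed square centered at p̄ with sides of length 2η parallel to the axes. -/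
open Set Topology
open scoped ENNReal

/-!
`boxMult ξ a a' b b' = ℓ*(a', b) - ℓ*(a, b) - ℓ*(a', b') + ℓ*(a, b')` is nonnegative, since sending
each component of `{ξ ≤ b}` to the component of `{ξ ≤ b'}` containing it loses at least as many of
the components meeting `{ξ ≤ a'}` as of those meeting `{ξ ≤ a}`; being additive under cuts, it
grows with the box. If `|φ - ψ| ≤ η`, the sublevel sets of `ψ` interleave with those of `φ` at
levels shifted by `η`, so `boxMult ψ` on the square of radius `η + δ` about `p̄` is squeezed
between `boxMult φ` on the squares of radii `δ` and `2η + δ`, both equal to `μ(p̄)` for small radii.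

On the other hand `boxMult` of a box counts the cornerpoints inside it, with multiplicity, provided
none lies on its boundary: cutting along lines that miss the cornerpoints reduces this to boxes
containing at most one cornerpoint, and a box without cornerpoints has `boxMult = 0` because, by
compactness, it splits into a fine grid of boxes each lying in a small square about a point of
multiplicity zero. Choosing `δ` so that the squares of radii `η` and `η + δ` contain the same
cornerpoints of `ψ` gives the theorem.
-/

namespace SizeFunction

open Metric Function

section Components

variable {M : Type*} [TopologicalSpace M]

theorem _root_.Set.ncard_image_add_ncard_le {α β : Type*} (g : α → β) {X Y : Set α}
    (hYX : Y ⊆ X) (hX : X.Finite) : (g '' X).ncard + Y.ncard ≤ X.ncard + (g '' Y).ncard := by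
  have hcover : g '' X ⊆ g '' (X \ Y) ∪ g '' Y := by
    rw [← image_union, sdiff_union_of_subset hYX]
  have hdiff : (X \ Y).ncard + Y.ncard = X.ncard := ncard_sdiff_add_ncard_of_subset hYX hX
  have := (ncard_le_ncard hcover ((hX.sdiff.image g).union ((hX.subset hYX).image g))).trans
    (ncard_union_le _ _)
  have := ncard_image_le (f := g) (hX.sdiff (t := Y))
  omega

theorem biUnion_connectedComponentIn {B B' : Set M} (hBB' : B ⊆ B') {P : M} (hP : P ∈ B) :
    ⋃ Q ∈ connectedComponentIn B P, connectedComponentIn B' Q = connectedComponentIn B' P := by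
  refine (iUnion₂_subset fun Q hQ => ?_).antisymm
    (subset_biUnion_of_mem (u := fun Q => connectedComponentIn B' Q) (mem_connectedComponentIn hP))
  rw [connectedComponentIn_eq (connectedComponentIn_mono P hBB' hQ)]

theorem finite_image_connectedComponentIn [CompactSpace M] [LocallyConnectedSpace M]
    {A U B : Set M} (hA : IsClosed A) (hU : IsOpen U) (hAU : A ⊆ U) (hUB : U ⊆ B) :
    (connectedComponentIn B '' A).Finite := by
  have hcover : A ⊆ ⋃ P ∈ A, connectedComponentIn U P := fun P hP =>
    mem_biUnion hP (mem_connectedComponentIn (hAU hP))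
  obtain ⟨t, htA, htfin, hcover'⟩ :=
    hA.isCompact.elim_finite_subcover_image (fun P _ => hU.connectedComponentIn) hcover
  refine (htfin.image (connectedComponentIn B)).subset ?_
  rintro _ ⟨Q, hQ, rfl⟩
  obtain ⟨P, hPt, hQP⟩ : ∃ P ∈ t, Q ∈ connectedComponentIn U P := by simpa using hcover' hQ
  exact ⟨P, hPt, connectedComponentIn_eq (connectedComponentIn_mono P hUB hQP)⟩

noncomputable def compCount (A B : Set M) : ℕ := (connectedComponentIn B '' A).ncard

noncomputable def compMixedDiff (A A' B B' : Set M) : ℤ :=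
  compCount A' B - compCount A B - compCount A' B' + compCount A B'

theorem compMixedDiff_nonneg {A A' B B' : Set M} (hAA' : A ⊆ A') (hA'B : A' ⊆ B) (hBB' : B ⊆ B')
    (hfin : (connectedComponentIn B '' A').Finite) : 0 ≤ compMixedDiff A A' B B' := by
  -- `g` sends a component of `B` to the component of `B'` containing it.
  set g : Set M → Set M := fun D => ⋃ Q ∈ D, connectedComponentIn B' Q
  have hpush : ∀ X ⊆ B, connectedComponentIn B' '' X = g '' (connectedComponentIn B '' X) := by
    intro X hXB
    rw [image_image]
    exact image_congr fun P hP => (biUnion_connectedComponentIn hBB' (hXB hP)).symm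
  have := ncard_image_add_ncard_le g (image_mono hAA') hfin
  rw [← hpush A' hA'B, ← hpush A (hAA'.trans hA'B)] at this
  simp only [compMixedDiff, compCount]
  omega

theorem compMixedDiff_le_compMixedDiff [CompactSpace M] [LocallyConnectedSpace M]
    {A₁ A A' A₂ U B₁ B B' B₂ : Set M} (h₁ : A₁ ⊆ A) (h : A ⊆ A') (h₂ : A' ⊆ A₂) (hA₂U : A₂ ⊆ U)
    (hUB₁ : U ⊆ B₁) (h₃ : B₁ ⊆ B) (h' : B ⊆ B') (h₄ : B' ⊆ B₂) (hA₂ : IsClosed A₂) (hU : IsOpen U) :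
    compMixedDiff A A' B B' ≤ compMixedDiff A₁ A₂ B₁ B₂ := by
  have hfin : ∀ X ⊆ A₂, ∀ Y, B₁ ⊆ Y → (connectedComponentIn Y '' X).Finite := fun X hX Y hY =>
    (finite_image_connectedComponentIn hA₂ hU hA₂U (hUB₁.trans hY)).subset (image_mono hX)
  have hB₁ : A₂ ⊆ B₁ := hA₂U.trans hUB₁
  -- the difference of the two sides is a sum of four mixed differences of nested chains
  have := compMixedDiff_nonneg (h₁.trans (h.trans h₂)) hB₁ h₃ (hfin A₂ le_rfl B₁ le_rfl)
  have := compMixedDiff_nonneg (h₁.trans (h.trans h₂)) (hB₁.trans (h₃.trans h')) h₄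
    (hfin A₂ le_rfl B' (h₃.trans h'))
  have := compMixedDiff_nonneg h₁ (h.trans (h₂.trans (hB₁.trans h₃))) h' (hfin A (h.trans h₂) B h₃)
  have := compMixedDiff_nonneg h₂ (hB₁.trans h₃) h' (hfin A₂ le_rfl B h₃)
  simp only [compMixedDiff] at *
  omega

end Components

section Sublevel

variable {M : Type*} [TopologicalSpace M]

theorem rsf_eq_compCount (ξ : M → ℝ) (x y : ℝ) :
    rsf ξ x y = compCount {P | ξ P ≤ x} {P | ξ P ≤ y} := by
  simp only [rsf, compCount, image, eq_comm (a := connectedComponentIn _ _)]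
  rfl

/-- Number of cornerpoints of the size function of `ξ` in `(a, a'] × (b, b']`, for
`a ≤ a' < b ≤ b'`. -/
noncomputable def boxMult (ξ : M → ℝ) (a a' b b' : ℝ) : ℤ :=
  compMixedDiff {P | ξ P ≤ a} {P | ξ P ≤ a'} {P | ξ P ≤ b} {P | ξ P ≤ b'}

noncomputable def squareMult (ξ : M → ℝ) (p : ℝ × ℝ) (r : ℝ) : ℤ :=
  boxMult ξ (p.1 - r) (p.1 + r) (p.2 - r) (p.2 + r)

theorem mult_eq_sInf (ξ : M → ℝ) (p : ℝ × ℝ) :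
    mult ξ p = sInf {z | ∃ ε, 0 < ε ∧ p.1 + ε < p.2 - ε ∧ z = squareMult ξ p ε} := by
  simp only [mult, squareMult, boxMult, compMixedDiff, rsf_eq_compCount]

theorem boxMult_add_fst (ξ : M → ℝ) (a s a' b b' : ℝ) :
    boxMult ξ a s b b' + boxMult ξ s a' b b' = boxMult ξ a a' b b' := by
  simp only [boxMult, compMixedDiff]; ring

theorem boxMult_add_snd (ξ : M → ℝ) (a a' b t b' : ℝ) :
    boxMult ξ a a' b t + boxMult ξ a a' t b' = boxMult ξ a a' b b' := by
  simp only [boxMult, compMixedDiff]; ring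

theorem sum_boxMult_grid (ξ : M → ℝ) (x y : ℕ → ℝ) (m n : ℕ) :
    ∑ i ∈ Finset.range m, ∑ j ∈ Finset.range n, boxMult ξ (x i) (x (i + 1)) (y j) (y (j + 1)) =
      boxMult ξ (x 0) (x m) (y 0) (y n) := by
  have hsnd : ∀ a a' n, ∑ j ∈ Finset.range n, boxMult ξ a a' (y j) (y (j + 1)) =
      boxMult ξ a a' (y 0) (y n) := by
    intro a a' n
    induction n with
    | zero => simp [boxMult, compMixedDiff]
    | succ n ih => rw [Finset.sum_range_succ, ih, boxMult_add_snd]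
  simp only [hsnd]
  induction m with
  | zero => simp [boxMult, compMixedDiff]
  | succ m ih => rw [Finset.sum_range_succ, ih, boxMult_add_fst]

theorem boxMult_nonpos_of_forall_small {ξ : M → ℝ} {a a' b b' δ : ℝ} (ha : a ≤ a') (hb : b ≤ b')
    (hδ : 0 < δ) (hsmall : ∀ s s' t t', a ≤ s → s ≤ s' → s' ≤ a' → b ≤ t → t ≤ t' → t' ≤ b' →
      s' - s < δ → t' - t < δ → boxMult ξ s s' t t' ≤ 0) :
    boxMult ξ a a' b b' ≤ 0 := by
  obtain ⟨N, hN⟩ := exists_nat_gt (max ((a' - a) / δ) ((b' - b) / δ))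
  have hN₀ : (0 : ℝ) < N := lt_of_le_of_lt (le_max_of_le_left (by bound)) hN
  set u := (a' - a) / N
  set v := (b' - b) / N
  have hu : 0 ≤ u ∧ u < δ ∧ N * u = a' - a := by
    refine ⟨by bound, ?_, by simp only [u]; field_simp⟩
    rw [div_lt_iff₀ hN₀, mul_comm, ← div_lt_iff₀ hδ]; exact (le_max_left _ _).trans_lt hN
  have hv : 0 ≤ v ∧ v < δ ∧ N * v = b' - b := by
    refine ⟨by bound, ?_, by simp only [v]; field_simp⟩
    rw [div_lt_iff₀ hN₀, mul_comm, ← div_lt_iff₀ hδ]; exact (le_max_right _ _).trans_lt hN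
  have hgrid : boxMult ξ a a' b b' = ∑ i ∈ Finset.range N, ∑ j ∈ Finset.range N,
      boxMult ξ (a + i * u) (a + (i + 1 : ℕ) * u) (b + j * v) (b + (j + 1 : ℕ) * v) := by
    rw [sum_boxMult_grid ξ (fun i => a + i * u) (fun j => b + j * v)]
    simp only [hu.2.2, hv.2.2]; ring_nf
  rw [hgrid]
  refine Finset.sum_nonpos fun i hi => Finset.sum_nonpos fun j hj => ?_
  have hi : (i : ℝ) + 1 ≤ N := by exact_mod_cast Finset.mem_range.1 hi
  have hj : (j : ℝ) + 1 ≤ N := by exact_mod_cast Finset.mem_range.1 hj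
  push_cast
  apply hsmall <;> nlinarith

variable [CompactSpace M] [LocallyConnectedSpace M] {ξ : M → ℝ}

theorem boxMult_nonneg (hξ : Continuous ξ) {a a' b b' : ℝ} (ha : a ≤ a') (hab : a' < b)
    (hb : b ≤ b') : 0 ≤ boxMult ξ a a' b b' :=
  compMixedDiff_nonneg (fun _ hP => hP.trans ha) (fun _ hP => hP.trans hab.le)
    (fun _ hP => hP.trans hb) (finite_image_connectedComponentIn (isClosed_le hξ continuous_const)
      (isOpen_lt hξ continuous_const) (fun _ hP => hP.trans_lt hab)
      fun P (hP : ξ P < b) => show ξ P ≤ b from hP.le)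

theorem boxMult_le_boxMult_of_abs_sub_le (hξ : Continuous ξ) {ζ : M → ℝ} {η : ℝ}
    (hd : ∀ P, |ξ P - ζ P| ≤ η) {a₁ a a' a₂ b₁ b b' b₂ : ℝ} (h₁ : a₁ + η ≤ a) (h : a ≤ a')
    (h₂ : a' + η ≤ a₂) (h₂₃ : a₂ < b₁) (h₃ : b₁ + η ≤ b) (h' : b ≤ b') (h₄ : b' + η ≤ b₂) :
    boxMult ζ a a' b b' ≤ boxMult ξ a₁ a₂ b₁ b₂ := by
  have hζ : ∀ P, ζ P ≤ ξ P + η := fun P => by linarith [(abs_le.1 (hd P)).1]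
  have hξ' : ∀ P, ξ P ≤ ζ P + η := fun P => by linarith [(abs_le.1 (hd P)).2]
  refine compMixedDiff_le_compMixedDiff (U := {P | ξ P < b₁}) ?_ ?_ ?_ ?_ ?_ ?_ ?_ ?_
    (isClosed_le hξ continuous_const) (isOpen_lt hξ continuous_const) <;>
  intro P hP <;> simp only [mem_ofPred_eq] at hP ⊢ <;> linarith [hζ P, hξ' P]

theorem boxMult_mono (hξ : Continuous ξ) {a₁ a a' a₂ b₁ b b' b₂ : ℝ} (h₁ : a₁ ≤ a) (h : a ≤ a')
    (h₂ : a' ≤ a₂) (h₂₃ : a₂ < b₁) (h₃ : b₁ ≤ b) (h' : b ≤ b') (h₄ : b' ≤ b₂) :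
    boxMult ξ a a' b b' ≤ boxMult ξ a₁ a₂ b₁ b₂ :=
  boxMult_le_boxMult_of_abs_sub_le hξ (η := 0) (by simp) (by simpa) h (by simpa) h₂₃ (by simpa) h'
    (by simpa)

theorem exists_squareMult_eq_mult (hξ : Continuous ξ) {p : ℝ × ℝ} (hp : p.1 < p.2) :
    ∃ ε₀ > 0, p.1 + ε₀ < p.2 - ε₀ ∧ ∀ ε, 0 < ε → ε ≤ ε₀ → squareMult ξ p ε = mult ξ p := by
  set Z := {z | ∃ ε, 0 < ε ∧ p.1 + ε < p.2 - ε ∧ z = squareMult ξ p ε}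
  have hne : Z.Nonempty := ⟨_, (p.2 - p.1) / 4, by linarith, by linarith, rfl⟩
  have hbdd : BddBelow Z := ⟨0, by
    rintro _ ⟨ε, hε, hgap, rfl⟩
    exact boxMult_nonneg hξ (by linarith) hgap (by linarith)⟩
  obtain ⟨ε₀, hε₀, hgap, hZ⟩ : sInf Z ∈ Z := Int.csInf_mem hne hbdd
  refine ⟨ε₀, hε₀, hgap, fun ε hε hεε₀ => le_antisymm ?_ ?_⟩
  · rw [mult_eq_sInf, hZ]
    exact boxMult_mono hξ (by linarith) (by linarith) (by linarith) hgap (by linarith)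
      (by linarith) (by linarith)
  · rw [mult_eq_sInf]
    exact csInf_le hbdd ⟨ε, hε, by linarith, rfl⟩

theorem mult_nonneg (hξ : Continuous ξ) {q : ℝ × ℝ} (hq : q.1 < q.2) : 0 ≤ mult ξ q := by
  obtain ⟨ε₀, hε₀, hgap, hsq⟩ := exists_squareMult_eq_mult hξ hq
  rw [← hsq ε₀ hε₀ le_rfl]
  exact boxMult_nonneg hξ (by linarith) hgap (by linarith)

theorem boxMult_le_mult_of_mem_ball (hξ : Continuous ξ) {q : ℝ × ℝ} {ε : ℝ}
    (hgap : q.1 + ε < q.2 - ε) (hsq : squareMult ξ q ε = mult ξ q) {a a' b b' : ℝ}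
    (ha : a ≤ a') (hb : b ≤ b') (h : (a, b) ∈ ball q ε) (h' : (a', b') ∈ ball q ε) :
    boxMult ξ a a' b b' ≤ mult ξ q := by
  simp only [mem_ball, Prod.dist_eq, Real.dist_eq, max_lt_iff, abs_lt] at h h'
  rw [← hsq]
  exact boxMult_mono hξ (by linarith) ha (by linarith) (by linarith) (by linarith) hb
    (by linarith)

theorem boxMult_eq_zero (hξ : Continuous ξ) {a a' b b' : ℝ} (ha : a ≤ a') (hab : a' < b)
    (hb : b ≤ b') (h : ∀ q ∈ Icc a a' ×ˢ Icc b b', mult ξ q = 0) : boxMult ξ a a' b b' = 0 := by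
  set K := Icc a a' ×ˢ Icc b b'
  have hK : ∀ q ∈ K, q.1 < q.2 := fun q hq => by
    simp only [K, mem_prod, mem_Icc] at hq; linarith
  choose ε hε hgap hsq using fun q : K => exists_squareMult_eq_mult hξ (hK q q.2)
  obtain ⟨δ, hδ, hleb⟩ := lebesgue_number_lemma_of_metric (isCompact_Icc.prod isCompact_Icc)
    (c := fun q : K => ball (q : ℝ × ℝ) (ε q)) (fun _ => isOpen_ball)
    fun q hq => mem_iUnion.2 ⟨⟨q, hq⟩, mem_ball_self (hε _)⟩
  refine le_antisymm (boxMult_nonpos_of_forall_small ha hb hδ ?_) (boxMult_nonneg hξ ha hab hb)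
  intro s s' t t' hs hss' hs' ht htt' ht' hsδ htδ
  obtain ⟨q, hq⟩ := hleb (s, t) ⟨⟨hs, hss'.trans hs'⟩, ⟨ht, htt'.trans ht'⟩⟩
  have hcorner : (s', t') ∈ ball (s, t) δ := by
    simp only [mem_ball, Prod.dist_eq, Real.dist_eq, max_lt_iff, abs_lt]
    refine ⟨⟨?_, ?_⟩, ?_, ?_⟩ <;> linarith
  exact (boxMult_le_mult_of_mem_ball hξ (hgap q) (hsq q _ (hε q) le_rfl) hss' htt'
    (hq (mem_ball_self hδ)) (hq hcorner)).trans_eq (h q q.2)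

end Sublevel

theorem _root_.Finset.exists_cut {α : Type*} (f : α → ℝ) {F : Finset α} {c d : α} (hc : c ∈ F)
    (hd : d ∈ F) (h : f c ≠ f d) :
    ∃ s, (∀ q ∈ F, f q ≠ s) ∧ (∃ q ∈ F, f q < s) ∧ ∃ q ∈ F, s < f q := by
  wlog hlt : f c < f d generalizing c d
  · exact this hd hc h.symm (h.lt_or_gt.resolve_left hlt)
  obtain ⟨s, ⟨hcs, hsd⟩, hsF⟩ := ((Ioo_infinite hlt).sdiff (F.image f).finite_toSet).nonempty
  exact ⟨s, fun q hq hqs => hsF (hqs ▸ Finset.mem_coe.2 (Finset.mem_image_of_mem f hq)),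
    ⟨c, hc, hcs⟩, d, hd, hsd⟩

section Counting

variable {M : Type*} [TopologicalSpace M] {ξ : M → ℝ}

-- Both conclusions glue along a cut of the box, so they are proved by one induction.
def BoxCount (ξ : M → ℝ) (a a' b b' : ℝ) (F : Finset (ℝ × ℝ)) : Prop :=
  ↑F ⊆ Ioo a a' ×ˢ Ioo b b' →
    ∑ q ∈ F, mult ξ q ≤ boxMult ξ a a' b b' ∧
      (Icc a a' ×ˢ Icc b b' ∩ support (mult ξ) ⊆ ↑F →
        boxMult ξ a a' b b' = ∑ q ∈ F, mult ξ q)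

theorem BoxCount.union_fst {a s a' b b' : ℝ} (hs : a ≤ s) (hs' : s ≤ a') {F₁ F₂ : Finset (ℝ × ℝ)}
    (h₁ : ∀ q ∈ F₁, q.1 < s) (h₂ : ∀ q ∈ F₂, s < q.1) (H₁ : BoxCount ξ a s b b' F₁)
    (H₂ : BoxCount ξ s a' b b' F₂) : BoxCount ξ a a' b b' (F₁ ∪ F₂) := by
  intro hF
  have hF₁ : ↑F₁ ⊆ Ioo a s ×ˢ Ioo b b' := fun q hq => by
    have := hF (Finset.mem_union_left F₂ hq)
    simp only [mem_prod, mem_Ioo] at this ⊢; exact ⟨⟨this.1.1, h₁ q hq⟩, this.2⟩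
  have hF₂ : ↑F₂ ⊆ Ioo s a' ×ˢ Ioo b b' := fun q hq => by
    have := hF (Finset.mem_union_right F₁ hq)
    simp only [mem_prod, mem_Ioo] at this ⊢; exact ⟨⟨h₂ q hq, this.1.2⟩, this.2⟩
  obtain ⟨hle₁, heq₁⟩ := H₁ hF₁
  obtain ⟨hle₂, heq₂⟩ := H₂ hF₂
  have hdisj : Disjoint F₁ F₂ := Finset.disjoint_left.2 fun q hq₁ hq₂ =>
    (h₁ q hq₁).not_gt (h₂ q hq₂)
  rw [Finset.sum_union hdisj, ← boxMult_add_fst ξ a s a' b b']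
  refine ⟨add_le_add hle₁ hle₂, fun hZ => ?_⟩
  have hZ₁ : Icc a s ×ˢ Icc b b' ∩ support (mult ξ) ⊆ ↑F₁ := fun q ⟨hq, hm⟩ =>
    (Finset.mem_union.1 (hZ ⟨prod_mono (Icc_subset_Icc_right hs') le_rfl hq, hm⟩)).resolve_right
      fun h => (h₂ q h).not_ge hq.1.2
  have hZ₂ : Icc s a' ×ˢ Icc b b' ∩ support (mult ξ) ⊆ ↑F₂ := fun q ⟨hq, hm⟩ =>
    (Finset.mem_union.1 (hZ ⟨prod_mono (Icc_subset_Icc_left hs) le_rfl hq, hm⟩)).resolve_left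
      fun h => (h₁ q h).not_ge hq.1.1
  rw [heq₁ hZ₁, heq₂ hZ₂]

theorem BoxCount.union_snd {a a' b t b' : ℝ} (ht : b ≤ t) (ht' : t ≤ b') {F₁ F₂ : Finset (ℝ × ℝ)}
    (h₁ : ∀ q ∈ F₁, q.2 < t) (h₂ : ∀ q ∈ F₂, t < q.2) (H₁ : BoxCount ξ a a' b t F₁)
    (H₂ : BoxCount ξ a a' t b' F₂) : BoxCount ξ a a' b b' (F₁ ∪ F₂) := by
  intro hF
  have hF₁ : ↑F₁ ⊆ Ioo a a' ×ˢ Ioo b t := fun q hq => by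
    have := hF (Finset.mem_union_left F₂ hq)
    simp only [mem_prod, mem_Ioo] at this ⊢; exact ⟨this.1, this.2.1, h₁ q hq⟩
  have hF₂ : ↑F₂ ⊆ Ioo a a' ×ˢ Ioo t b' := fun q hq => by
    have := hF (Finset.mem_union_right F₁ hq)
    simp only [mem_prod, mem_Ioo] at this ⊢; exact ⟨this.1, h₂ q hq, this.2.2⟩
  obtain ⟨hle₁, heq₁⟩ := H₁ hF₁
  obtain ⟨hle₂, heq₂⟩ := H₂ hF₂
  have hdisj : Disjoint F₁ F₂ := Finset.disjoint_left.2 fun q hq₁ hq₂ =>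
    (h₁ q hq₁).not_gt (h₂ q hq₂)
  rw [Finset.sum_union hdisj, ← boxMult_add_snd ξ a a' b t b']
  refine ⟨add_le_add hle₁ hle₂, fun hZ => ?_⟩
  have hZ₁ : Icc a a' ×ˢ Icc b t ∩ support (mult ξ) ⊆ ↑F₁ := fun q ⟨hq, hm⟩ =>
    (Finset.mem_union.1 (hZ ⟨prod_mono le_rfl (Icc_subset_Icc_right ht') hq, hm⟩)).resolve_right
      fun h => (h₂ q h).not_ge hq.2.2
  have hZ₂ : Icc a a' ×ˢ Icc t b' ∩ support (mult ξ) ⊆ ↑F₂ := fun q ⟨hq, hm⟩ =>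
    (Finset.mem_union.1 (hZ ⟨prod_mono le_rfl (Icc_subset_Icc_left ht) hq, hm⟩)).resolve_left
      fun h => (h₁ q h).not_ge hq.2.1
  rw [heq₁ hZ₁, heq₂ hZ₂]

variable [CompactSpace M] [LocallyConnectedSpace M]

theorem boxCount_empty (hξ : Continuous ξ) {a a' b b' : ℝ} (ha : a ≤ a') (hab : a' < b)
    (hb : b ≤ b') : BoxCount ξ a a' b b' ∅ := fun _ => by
  refine ⟨by simpa using boxMult_nonneg hξ ha hab hb, fun hZ => ?_⟩
  rw [Finset.sum_empty]
  exact boxMult_eq_zero hξ ha hab hb fun q hq =>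
    by_contra fun hm => Finset.notMem_empty q (hZ ⟨hq, hm⟩)

theorem boxCount_singleton (hξ : Continuous ξ) {a a' b b' : ℝ} (hab : a' < b) {c : ℝ × ℝ}
    (hc : c ∈ Ioo a a' ×ˢ Ioo b b') : BoxCount ξ a a' b b' {c} := by
  simp only [mem_prod, mem_Ioo] at hc
  obtain ⟨ε₀, hε₀, hgap, hsq⟩ := exists_squareMult_eq_mult hξ (p := c) (by linarith)
  obtain ⟨ε, hε⟩ : ∃ ε, 0 < ε ∧ ε ≤ ε₀ ∧ a < c.1 - ε ∧ c.1 + ε < a' ∧ b < c.2 - ε ∧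
      c.2 + ε < b' := by
    set m := min ε₀ (min (min (c.1 - a) (a' - c.1)) (min (c.2 - b) (b' - c.2)))
    have hm : 0 < m := by simp only [m, lt_min_iff]; refine ⟨hε₀, ⟨?_, ?_⟩, ?_, ?_⟩ <;> linarith
    have := min_le_left ε₀ (min (min (c.1 - a) (a' - c.1)) (min (c.2 - b) (b' - c.2)))
    have := min_le_right ε₀ (min (min (c.1 - a) (a' - c.1)) (min (c.2 - b) (b' - c.2)))
    simp only [le_min_iff] at this
    refine ⟨m / 2, by positivity, ?_, ?_, ?_, ?_, ?_⟩ <;> linarith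
  -- cut the box along the four sides of the `ε`-square around `c`
  have hsquare : BoxCount ξ (c.1 - ε) (c.1 + ε) (c.2 - ε) (c.2 + ε) {c} := fun _ => by
    simp [← hsq ε hε.1 hε.2.1, squareMult]
  have hcol : BoxCount ξ (c.1 - ε) (c.1 + ε) b b' (∅ ∪ ({c} ∪ ∅)) :=
    BoxCount.union_snd (t := c.2 - ε) (by linarith) (by linarith) (by simp) (by simp; linarith)
      (boxCount_empty hξ (by linarith) (by linarith) (by linarith))
      (BoxCount.union_snd (t := c.2 + ε) (by linarith) (by linarith) (by simp; linarith) (by simp)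
        hsquare (boxCount_empty hξ (by linarith) (by linarith) (by linarith)))
  have hrow : BoxCount ξ a a' b b' (∅ ∪ ({c} ∪ ∅)) :=
    BoxCount.union_fst (s := c.1 - ε) (by linarith) (by linarith) (by simp) (by simp; linarith)
      (boxCount_empty hξ (by linarith) (by linarith) (by linarith))
      (BoxCount.union_fst (s := c.1 + ε) (by linarith) (by linarith) (by simp; linarith) (by simp)
        (by simpa using hcol) (boxCount_empty hξ (by linarith) hab (by linarith)))
  simpa using hrow

theorem boxCount (hξ : Continuous ξ) (F : Finset (ℝ × ℝ)) {a a' b b' : ℝ} (ha : a ≤ a')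
    (hab : a' < b) (hb : b ≤ b') : BoxCount ξ a a' b b' F := by
  induction F using Finset.strongInduction generalizing a a' b b' with
  | H F ih =>
  intro hF
  have hmem : ∀ q ∈ F, (a < q.1 ∧ q.1 < a') ∧ b < q.2 ∧ q.2 < b' := fun q hq => by
    simpa only [mem_prod, mem_Ioo] using hF hq
  rcases F.eq_empty_or_nonempty with rfl | ⟨c, hc⟩
  · exact boxCount_empty hξ ha hab hb hF
  by_cases hsingle : ∀ d ∈ F, d = c
  · obtain rfl : F = {c} := Finset.eq_singleton_iff_unique_mem.2 ⟨hc, hsingle⟩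
    exact boxCount_singleton hξ hab (hF (Finset.mem_singleton_self c)) hF
  push Not at hsingle
  obtain ⟨d, hd, hdc⟩ := hsingle
  by_cases hfst : d.1 = c.1
  · obtain ⟨t, htF, ⟨q₁, hq₁, hq₁t⟩, q₂, hq₂, htq₂⟩ :=
      F.exists_cut Prod.snd hd hc fun h => hdc (Prod.ext hfst h)
    have key := BoxCount.union_snd (ξ := ξ) (a := a) (a' := a') (b := b) (b' := b') (t := t)
      (F₁ := F.filter (·.2 < t)) (F₂ := F.filter (¬ ·.2 < t))
      (by linarith [hmem q₁ hq₁]) (by linarith [hmem q₂ hq₂])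
      (fun q hq => (Finset.mem_filter.1 hq).2)
      (fun q hq => lt_of_le_of_ne (not_lt.1 (Finset.mem_filter.1 hq).2)
        (htF q (Finset.mem_filter.1 hq).1).symm)
      (ih _ (Finset.filter_ssubset.2 ⟨q₂, hq₂, htq₂.not_gt⟩) ha hab (by linarith [hmem q₁ hq₁]))
      (ih _ (Finset.filter_ssubset.2 ⟨q₁, hq₁, not_not.2 hq₁t⟩) ha
        (by linarith [hmem q₁ hq₁]) (by linarith [hmem q₂ hq₂]))
    rw [Finset.filter_union_filter_not_eq] at key
    exact key hF
  · obtain ⟨s, hsF, ⟨q₁, hq₁, hq₁s⟩, q₂, hq₂, hsq₂⟩ := F.exists_cut Prod.fst hd hc hfst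
    have key := BoxCount.union_fst (ξ := ξ) (a := a) (a' := a') (b := b) (b' := b') (s := s)
      (F₁ := F.filter (·.1 < s)) (F₂ := F.filter (¬ ·.1 < s))
      (by linarith [hmem q₁ hq₁]) (by linarith [hmem q₂ hq₂])
      (fun q hq => (Finset.mem_filter.1 hq).2)
      (fun q hq => lt_of_le_of_ne (not_lt.1 (Finset.mem_filter.1 hq).2)
        (hsF q (Finset.mem_filter.1 hq).1).symm)
      (ih _ (Finset.filter_ssubset.2 ⟨q₂, hq₂, hsq₂.not_gt⟩) (by linarith [hmem q₁ hq₁])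
        (by linarith [hmem q₂ hq₂]) hb)
      (ih _ (Finset.filter_ssubset.2 ⟨q₁, hq₁, not_not.2 hq₁s⟩) (by linarith [hmem q₂ hq₂])
        hab hb)
    rw [Finset.filter_union_filter_not_eq] at key
    exact key hF

theorem closedBall_eq_Icc_prod (p : ℝ × ℝ) (r : ℝ) :
    closedBall p r = Icc (p.1 - r) (p.1 + r) ×ˢ Icc (p.2 - r) (p.2 + r) := by
  rw [← Real.closedBall_eq_Icc, ← Real.closedBall_eq_Icc, closedBall_prod_same]

theorem ball_eq_Ioo_prod (p : ℝ × ℝ) (r : ℝ) :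
    ball p r = Ioo (p.1 - r) (p.1 + r) ×ˢ Ioo (p.2 - r) (p.2 + r) := by
  rw [← Real.ball_eq_Ioo, ← Real.ball_eq_Ioo, ball_prod_same]

theorem finite_closedBall_inter_support_mult (hξ : Continuous ξ) {p : ℝ × ℝ} {r : ℝ}
    (hr₀ : 0 ≤ r) (hr : p.1 + r < p.2 - r) : (closedBall p r ∩ support (mult ξ)).Finite := by
  set R := r + (p.2 - p.1 - 2 * r) / 4
  have hR : p.1 + R < p.2 - R := by simp only [R]; linarith
  by_contra hinf
  obtain ⟨F, hFsub, hcard⟩ := Set.Infinite.exists_subset_card_eq hinf ((squareMult ξ p R).toNat + 1)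
  have hFR : ↑F ⊆ ball p R := fun q hq =>
    closedBall_subset_ball (by simp only [R]; linarith) (hFsub hq).1
  rw [ball_eq_Ioo_prod] at hFR
  have hle : ∑ q ∈ F, mult ξ q ≤ squareMult ξ p R :=
    (boxCount hξ F (by simp only [R]; linarith) hR (by simp only [R]; linarith) hFR).1
  have hge : ∑ _q ∈ F, (1 : ℤ) ≤ ∑ q ∈ F, mult ξ q := Finset.sum_le_sum fun q hq => by
    obtain ⟨hqr, hne⟩ := hFsub hq
    rw [closedBall_eq_Icc_prod, mem_prod, mem_Icc, mem_Icc] at hqr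
    have := mult_nonneg hξ (q := q) (by linarith)
    exact lt_of_le_of_ne this (Ne.symm hne)
  rw [Finset.sum_const, hcard, nsmul_one] at hge
  omega

theorem squareMult_eq_finsum_mult (hξ : Continuous ξ) {p : ℝ × ℝ} {r : ℝ} (hr₀ : 0 ≤ r)
    (hr : p.1 + r < p.2 - r) (hfin : (closedBall p r ∩ support (mult ξ)).Finite)
    (hint : closedBall p r ∩ support (mult ξ) ⊆ ball p r) :
    squareMult ξ p r = ∑ᶠ q ∈ closedBall p r, mult ξ q := by
  rw [finsum_mem_eq_sum _ hfin]
  refine (boxCount hξ hfin.toFinset (by linarith) hr (by linarith) ?_).2 ?_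
  · rw [Finite.coe_toFinset, ← ball_eq_Ioo_prod]; exact hint
  · rw [Finite.coe_toFinset, ← closedBall_eq_Icc_prod]

theorem squareMult_eq_mult_of_abs_sub_le (hξ : Continuous ξ) {ζ : M → ℝ} (hζ : Continuous ζ)
    {p : ℝ × ℝ} {ε₀ η δ : ℝ} (hgap : p.1 + ε₀ < p.2 - ε₀)
    (hsq : ∀ ε, 0 < ε → ε ≤ ε₀ → squareMult ξ p ε = mult ξ p) (hd : ∀ P, |ξ P - ζ P| ≤ η)
    (hη : 0 ≤ η) (hδ : 0 < δ) (hδε₀ : 2 * η + δ ≤ ε₀) : squareMult ζ p (η + δ) = mult ξ p := by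
  have hd' : ∀ P, |ζ P - ξ P| ≤ η := fun P => abs_sub_comm (ξ P) (ζ P) ▸ hd P
  apply le_antisymm
  · rw [← hsq (2 * η + δ) (by positivity) hδε₀]
    exact boxMult_le_boxMult_of_abs_sub_le hξ hd (by linarith) (by linarith) (by linarith)
      (by linarith) (by linarith) (by linarith) (by linarith)
  · rw [← hsq δ hδ (by linarith)]
    exact boxMult_le_boxMult_of_abs_sub_le hζ hd' (by linarith) (by linarith) (by linarith)
      (by linarith) (by linarith) (by linarith) (by linarith)

end Counting

theorem _root_.Set.Finite.exists_pos_inter_closedBall_subset {X : Type*} [PseudoMetricSpace X]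
    {s : Set X} (hs : s.Finite) (p : X) (η : ℝ) {r : ℝ} (hr : 0 < r) :
    ∃ δ, 0 < δ ∧ δ ≤ r ∧ s ∩ closedBall p (η + δ) ⊆ closedBall p η := by
  have hgap : ∀ᶠ δ in 𝓝[>] (0 : ℝ), ∀ q ∈ s, dist q p ≤ η + δ → dist q p ≤ η := by
    refine (Filter.eventually_all_finite hs).2 fun q _ => ?_
    by_cases hq : dist q p ≤ η
    · exact Filter.Eventually.of_forall fun _ _ => hq
    · filter_upwards [nhdsWithin_le_nhds (eventually_lt_nhds (sub_pos.2 (not_le.1 hq)))]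
        with δ hδ h
      linarith
  have hpos : ∀ᶠ δ in 𝓝[>] (0 : ℝ), 0 < δ := self_mem_nhdsWithin
  have hle : ∀ᶠ δ in 𝓝[>] (0 : ℝ), δ ≤ r := nhdsWithin_le_nhds (eventually_le_nhds hr)
  obtain ⟨δ, hδ, hδr, hδgap⟩ := (hpos.and (hle.and hgap)).exists
  exact ⟨δ, hδ, hδr, fun q hq => hδgap q hq.1 hq.2⟩

theorem setOf_abs_sub_le_eq_closedBall {x y r : ℝ} (hr : x + r < y - r) :
    {q : ℝ × ℝ | q.1 < q.2 ∧ |q.1 - x| ≤ r ∧ |q.2 - y| ≤ r} = closedBall (x, y) r := by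
  ext q
  simp only [mem_ofPred_eq, mem_closedBall, Prod.dist_eq, Real.dist_eq, max_le_iff]
  refine ⟨fun h => h.2, fun ⟨h₁, h₂⟩ => ⟨?_, h₁, h₂⟩⟩
  linarith [(abs_le.1 h₁).2, (abs_le.1 h₂).1]

end SizeFunction

open SizeFunction Metric Function

theorem local_constancy_of_multiplicity_general
    {M : Type*} [TopologicalSpace M] [CompactSpace M] [LocallyConnectedSpace M] {φ : M → ℝ} (hφ : Continuous φ)
    (xb yb : ℝ) (hp : xb < yb) :
    ∃ ηb > 0, ∀ η : ℝ, 0 ≤ η → η ≤ ηb → ∀ ψ : M → ℝ, Continuous ψ →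
      (∀ Q : M, |φ Q - ψ Q| ≤ η) →
      {q : ℝ × ℝ | q.1 < q.2 ∧ |q.1 - xb| ≤ η ∧ |q.2 - yb| ≤ η ∧ mult ψ q ≠ 0}.Finite ∧
      (∑ᶠ q ∈ {q : ℝ × ℝ | q.1 < q.2 ∧ |q.1 - xb| ≤ η ∧ |q.2 - yb| ≤ η}, mult ψ q) =
        mult φ (xb, yb) := by
  obtain ⟨ε₀, hε₀, hgap, hsq⟩ := exists_squareMult_eq_mult hφ (p := (xb, yb)) hp
  refine ⟨ε₀ / 4, by positivity, fun η hη₀ hη ψ hψ hd => ?_⟩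
  have hS := setOf_abs_sub_le_eq_closedBall (x := xb) (y := yb) (r := η) (by linarith)
  have hfin : (closedBall (xb, yb) (η + ε₀ / 2) ∩ support (mult ψ)).Finite :=
    finite_closedBall_inter_support_mult hψ (by positivity) (by dsimp only; linarith)
  obtain ⟨δ, hδ, hδε₀, hδsub⟩ := hfin.exists_pos_inter_closedBall_subset (xb, yb) η
    (r := ε₀ / 4) (by positivity)
  have hsupp : closedBall (xb, yb) (η + δ) ∩ support (mult ψ) =
      closedBall (xb, yb) η ∩ support (mult ψ) :=
    Subset.antisymm (fun q hq => ⟨hδsub ⟨⟨closedBall_subset_closedBall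
      (by linarith : η + δ ≤ η + ε₀ / 2) hq.1, hq.2⟩, hq.1⟩, hq.2⟩)
      (inter_subset_inter_left _ (closedBall_subset_closedBall (by linarith)))
  refine ⟨?_, ?_⟩
  · refine hfin.subset fun q ⟨h₀, h₁, h₂, hm⟩ =>
      ⟨closedBall_subset_closedBall (by linarith : η ≤ η + ε₀ / 2) ?_, hm⟩
    rw [← hS]; exact ⟨h₀, h₁, h₂⟩
  · rw [hS, ← finsum_mem_inter_support_eq _ _ _ hsupp,
      ← squareMult_eq_finsum_mult hψ (by positivity) (by dsimp only; linarith)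
        (hfin.subset (inter_subset_inter_left _
          (closedBall_subset_closedBall (by linarith : η + δ ≤ η + ε₀ / 2))))
        (hsupp ▸ inter_subset_left.trans (closedBall_subset_ball (by linarith : η < η + δ))),
      squareMult_eq_mult_of_abs_sub_le hφ hψ hgap hsq hd hη₀ hδ (by linarith)]

theorem local_constancy_of_multiplicity
    {M : Type*} [TopologicalSpace M] [CompactSpace M] [ConnectedSpace M] [LocallyConnectedSpace M] [T2Space M] {φ : M → ℝ} (hφ : Continuous φ)
    (xb yb : ℝ) (hp : xb < yb) :
    ∃ ηb > 0, ∀ η : ℝ, 0 ≤ η → η ≤ ηb → ∀ ψ : M → ℝ, Continuous ψ →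
      (∀ Q : M, |φ Q - ψ Q| ≤ η) →
      {q : ℝ × ℝ | q.1 < q.2 ∧ |q.1 - xb| ≤ η ∧ |q.2 - yb| ≤ η ∧ mult ψ q ≠ 0}.Finite ∧
      (∑ᶠ q ∈ {q : ℝ × ℝ | q.1 < q.2 ∧ |q.1 - xb| ≤ η ∧ |q.2 - yb| ≤ η}, mult ψ q) =
        mult φ (xb, yb) :=
  local_constancy_of_multiplicity_general hφ xb yb hp
end

section
/- Cantor–Bernstein with matching control: Let ε ≥ 0 and let (a_i)_{i∈ℕ}, (b_i)_{i∈ℕ} be sequences in a pseudo-metric space (X, d). If there exist injections f, g : ℕ → ℕ such that d(a_i, b_{f(i)}) ≤ ε and d(b_i, a_{g(i)}) ≤ ε for all i, then there exists a bijection l : ℕ → ℕ such that d(a_i, b_{l(i)}) ≤ ε for all i. -/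
open Set Topology
open scoped ENNReal

theorem cantor_bernstein_matching_general
    {X : Type*} [PseudoMetricSpace X] (ε : ℝ)
    (a b : ℕ → X) (f g : ℕ → ℕ)
    (hf : Function.Injective f) (hg : Function.Injective g)
    (hfd : ∀ i, dist (a i) (b (f i)) ≤ ε) (hgd : ∀ i, dist (b i) (a (g i)) ≤ ε) :
    ∃ l : ℕ → ℕ, Function.Bijective l ∧ ∀ i, dist (a i) (b (l i)) ≤ ε :=
  Function.Embedding.schroeder_bernstein_of_rel hf hg (fun i j ↦ dist (a i) (b j) ≤ ε) hfd
    fun j ↦ dist_comm (b j) (a (g j)) ▸ hgd j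

theorem cantor_bernstein_matching
    {X : Type*} [PseudoMetricSpace X] (ε : ℝ) (hε : 0 ≤ ε)
    (a b : ℕ → X) (f g : ℕ → ℕ)
    (hf : Function.Injective f) (hg : Function.Injective g)
    (hfd : ∀ i, dist (a i) (b (f i)) ≤ ε) (hgd : ∀ i, dist (b i) (a (g i)) ≤ ε) :
    ∃ l : ℕ → ℕ, Function.Bijective l ∧ ∀ i, dist (a i) (b (l i)) ≤ ε :=
  cantor_bernstein_matching_general ε a b f g hf hg hfd hgd
end
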